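/- Let R be a commutative ring with 1, let M be an R-module, and let n ≥ 1. There is a well-defined R-linear map φ : Sym^{2n} M → Sym²(Sym^n M) sending a₁·a₂·⋯·a_{2n} (a_i ∈ M) to the sum, over all n-element subsets N of {1, …, 2n} with 1 ∈ N, of (∏_{i∈N} a_i)·(∏_{j∉N} a_j), where each ∏ is taken in Sym^n M and the outer product in Sym²(Sym^n M). Moreover, if q : Sym²(Sym^n M) → Sym^{2n} M denotes the canonical surjection (induced by the identity of M^{⊗2n}), then q ∘ φ = ((2n−1)!/(n!·(n−1)!)) · id_{Sym^{2n} M}. -/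

import Mathlib

open scoped TensorProduct

/-- The submodule of relations defining the symmetric power: differences of pure tensors
related by a permutation of the factors. -/
def symRel (R : Type*) [CommRing R] (n : ℕ) (M : Type*) [AddCommGroup M] [Module R M] :
    Submodule R (⨂[R]^n M) :=
  Submodule.span R {x | ∃ (σ : Equiv.Perm (Fin n)) (v : Fin n → M),
    x = PiTensorProduct.tprod R v - PiTensorProduct.tprod R (v ∘ σ)}

/-- The `n`-th symmetric power of the `R`-module `M`: the quotient of the `n`-fold tensor
power by the permutation action of the symmetric group. -/
def SymPow (R : Type*) [CommRing R] (n : ℕ) (M : Type*) [AddCommGroup M] [Module R M] :=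
  (⨂[R]^n M) ⧸ symRel R n M

noncomputable instance (R : Type*) [CommRing R] (n : ℕ) (M : Type*) [AddCommGroup M] [Module R M] :
    AddCommGroup (SymPow R n M) :=
  inferInstanceAs (AddCommGroup ((⨂[R]^n M) ⧸ symRel R n M))

noncomputable instance (R : Type*) [CommRing R] (n : ℕ) (M : Type*) [AddCommGroup M] [Module R M] :
    Module R (SymPow R n M) :=
  inferInstanceAs (Module R ((⨂[R]^n M) ⧸ symRel R n M))

/-- The canonical quotient map from the tensor power to the symmetric power. -/
noncomputable def SymPow.mk (R : Type*) [CommRing R] (n : ℕ) (M : Type*) [AddCommGroup M] [Module R M] :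
    (⨂[R]^n M) →ₗ[R] SymPow R n M :=
  (symRel R n M).mkQ

/-- The product `v 0 · v 1 · ⋯ · v (n-1)` in the symmetric power `SymPow R n M`. -/
noncomputable def SymPow.prod (R : Type*) [CommRing R] {n : ℕ} {M : Type*} [AddCommGroup M] [Module R M]
    (v : Fin n → M) : SymPow R n M :=
  SymPow.mk R n M (PiTensorProduct.tprod R v)

/-- The wedge `v 0 ∧ v 1 ∧ ⋯ ∧ v (n-1)`, as an element of the `n`-th exterior power
`⋀[R]^n M`. -/
noncomputable def wedgeMk (R : Type*) [CommRing R] {n : ℕ} {M : Type*} [AddCommGroup M] [Module R M]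
    (v : Fin n → M) : ⋀[R]^n M :=
  ⟨ExteriorAlgebra.ιMulti R n v, ExteriorAlgebra.ιMulti_range R n (Set.mem_range_self v)⟩

/-!
Fix an index `z` and, for a `2n`-tuple `a`, let `S_z(a)` be the sum of
`(∏_{i ∈ N} aᵢ) · (∏_{j ∉ N} aⱼ)` over the `n`-subsets `N` containing `z`. Each summand is linear
in the tensor `a₁ ⊗ ⋯ ⊗ a_{2n}`, so `S_z` is defined on the tensor power. It descends to
`Sym^{2n} M` because a permutation `σ` of the factors turns `S_z` into `S_{σ z}`, and `S_z` does
not depend on `z`: the summand is invariant under `N ↦ Nᶜ`, which exchanges the subsets containing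
`z` but not `w` with those containing `w` but not `z`. After applying `q`, every summand becomes
`a₁ ⋯ a_{2n}`, and there are `C(2n-1, n-1)` of them.
-/

open Finset

theorem card_filter_mem_powersetCard {α : Type*} [Fintype α] [DecidableEq α] (a : α) {k : ℕ}
    (hk : 0 < k) :
    #{s ∈ powersetCard k (univ : Finset α) | a ∈ s} = (Fintype.card α - 1).choose (k - 1) := by
  rw [← card_univ, ← card_erase_of_mem (mem_univ a), ← card_powersetCard]
  refine card_nbij' (·.erase a) (insert a) ?_ ?_ ?_ ?_ <;> intro s hs <;>
    simp_all [subset_erase, card_erase_of_mem, card_insert_of_notMem]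
  omega

theorem card_compl_of_card_eq_half {n : ℕ} {N : Finset (Fin (n + n))} (h : N.card = n) :
    Nᶜ.card = n := by
  rw [card_compl, h, Fintype.card_fin]
  omega

def halvesContaining (n : ℕ) (z : Fin (n + n)) : Finset (Finset (Fin (n + n))) :=
  (univ.powersetCard n).filter (z ∈ ·)

namespace SymPow

variable {R M : Type*} [CommRing R] [AddCommGroup M] [Module R M]

theorem prod_comp_perm {n : ℕ} (v : Fin n → M) (σ : Equiv.Perm (Fin n)) :
    SymPow.prod R (v ∘ σ) = SymPow.prod R v :=
  ((Submodule.Quotient.eq (symRel R n M)).mpr (Submodule.subset_span ⟨σ, v, rfl⟩)).symm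

theorem prod_pair_comm {n : ℕ} (x y : SymPow R n M) :
    SymPow.prod R ![x, y] = SymPow.prod R ![y, x] := by
  rw [← prod_comp_perm ![y, x] (Equiv.swap 0 1)]
  congr 1
  ext i
  fin_cases i <;> rfl

theorem hom_ext {n : ℕ} {P : Type*} [AddCommGroup P] [Module R P] {f g : SymPow R n M →ₗ[R] P}
    (h : ∀ v : Fin n → M, f (SymPow.prod R v) = g (SymPow.prod R v)) : f = g :=
  Submodule.linearMap_qext _ (PiTensorProduct.ext (MultilinearMap.ext h))

variable (R) in
noncomputable def mul {n : ℕ} :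
    SymPow R n M →ₗ[R] SymPow R n M →ₗ[R] SymPow R 2 (SymPow R n M) :=
  let f := (SymPow.mk R 2 (SymPow R n M)).compMultilinearMap (PiTensorProduct.tprod R)
  LinearMap.mk₂ R (fun x y => f ![x, y])
    (fun x x' y => by
      simpa only [Matrix.vecCons, Fin.update_cons_zero] using f.map_update_add ![x, y] 0 x x')
    (fun c x y => by
      simpa only [Matrix.vecCons, Fin.update_cons_zero] using f.map_update_smul ![x, y] 0 c x)
    (fun x y y' => by
      simpa only [Matrix.vecCons, ← Fin.cons_update, Fin.update_cons_zero] using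
        f.map_update_add ![x, y] (Fin.succ 0) y y')
    (fun c x y => by
      simpa only [Matrix.vecCons, ← Fin.cons_update, Fin.update_cons_zero] using
        f.map_update_smul ![x, y] (Fin.succ 0) c y)

theorem mul_apply {n : ℕ} (x y : SymPow R n M) : mul R x y = SymPow.prod R ![x, y] := rfl

section ProdOn

variable {ι : Type*} [LinearOrder ι] {n : ℕ}

variable (R) in
noncomputable def prodOn (a : ι → M) (s : Finset ι) (h : s.card = n) : SymPow R n M :=
  SymPow.prod R (a ∘ s.orderEmbOfFin h)

theorem prodOn_eq_prod_comp (a : ι → M) {s : Finset ι} (h : s.card = n) {f : Fin n → ι}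
    (hf : Function.Injective f) (hfs : Set.range f = s) :
    prodOn R a s h = SymPow.prod R (a ∘ f) := by
  let τ : Fin n ≃ Fin n :=
    ((Equiv.ofInjective f hf).trans (Equiv.setCongr hfs)).trans (s.orderIsoOfFin h).symm.toEquiv
  have hτ : a ∘ f = (a ∘ s.orderEmbOfFin h) ∘ τ := by
    ext i
    exact congrArg (a ∘ Subtype.val)
      ((s.orderIsoOfFin h).apply_symm_apply (Equiv.setCongr hfs ⟨f i, i, rfl⟩)).symm
  rw [hτ, prod_comp_perm, prodOn]

theorem prodOn_congr (a : ι → M) {s t : Finset ι} (hst : s = t) (hs : s.card = n)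
    (ht : t.card = n) : prodOn R a s hs = prodOn R a t ht := by
  subst hst
  rfl

theorem prodOn_comp_equiv {κ : Type*} [LinearOrder κ] (a : κ → M) (σ : ι ≃ κ) {s : Finset ι}
    {t : Finset κ} (hst : (t : Set κ) = σ '' s) (hs : s.card = n) (ht : t.card = n) :
    prodOn R (a ∘ σ) s hs = prodOn R a t ht := by
  rw [prodOn_eq_prod_comp a ht (σ.injective.comp (s.orderEmbOfFin hs).injective)
    (by rw [Set.range_comp, range_orderEmbOfFin, hst])]
  rfl

end ProdOn

section Split

variable {n : ℕ}

variable (R) in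
noncomputable def splitProd (a : Fin (n + n) → M) (N : Finset (Fin (n + n))) :
    SymPow R 2 (SymPow R n M) :=
  if h : N.card = n then
    SymPow.prod R ![prodOn R a N h, prodOn R a Nᶜ (card_compl_of_card_eq_half h)]
  else 0

theorem splitProd_compl (a : Fin (n + n) → M) (N : Finset (Fin (n + n))) :
    splitProd R a Nᶜ = splitProd R a N := by
  by_cases h : N.card = n
  · rw [splitProd, dif_pos (card_compl_of_card_eq_half h), splitProd, dif_pos h,
      prod_pair_comm, prodOn_congr a (compl_compl N)]
  · have hc : Nᶜ.card ≠ n := fun hc => h (by simpa using card_compl_of_card_eq_half hc)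
    rw [splitProd, dif_neg hc, splitProd, dif_neg h]

theorem splitProd_comp_perm (a : Fin (n + n) → M) (σ : Equiv.Perm (Fin (n + n)))
    (N : Finset (Fin (n + n))) :
    splitProd R (a ∘ σ) N = splitProd R a (N.map σ.toEmbedding) := by
  by_cases h : N.card = n
  · have hσ : (N.map σ.toEmbedding).card = n := by rw [card_map, h]
    rw [splitProd, dif_pos h, splitProd, dif_pos hσ, prodOn_comp_equiv a σ (by simp) h hσ,
      prodOn_comp_equiv a σ (t := (N.map σ.toEmbedding)ᶜ)
        (by simp [Set.image_compl_eq σ.bijective]) _ _]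
  · rw [splitProd, dif_neg h, splitProd, dif_neg (by rwa [card_map])]

theorem sum_splitProd_comp_perm (a : Fin (n + n) → M) (σ : Equiv.Perm (Fin (n + n)))
    (z : Fin (n + n)) :
    ∑ N ∈ halvesContaining n z, splitProd R (a ∘ σ) N =
      ∑ N ∈ halvesContaining n (σ z), splitProd R a N := by
  refine sum_nbij' (·.map σ.toEmbedding) (·.map σ.symm.toEmbedding) ?_ ?_ ?_ ?_
    (fun N _ => splitProd_comp_perm a σ N) <;> intro N hN <;>
    simp_all [halvesContaining, map_map]

theorem sum_splitProd_eq (a : Fin (n + n) → M) (z w : Fin (n + n)) :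
    ∑ N ∈ halvesContaining n z, splitProd R a N =
      ∑ N ∈ halvesContaining n w, splitProd R a N := by
  rw [← sum_filter_add_sum_filter_not (halvesContaining n z) (w ∈ ·),
    ← sum_filter_add_sum_filter_not (halvesContaining n w) (z ∈ ·)]
  congr 1
  · simp only [halvesContaining, filter_filter, and_comm]
  · refine sum_nbij' compl compl ?_ ?_ (by simp) (by simp)
      (fun N _ => (splitProd_compl a N).symm) <;> intro N hN <;>
      simp_all [halvesContaining, card_compl_of_card_eq_half]

noncomputable def splitEquiv {N : Finset (Fin (n + n))} (h : N.card = n) :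
    Fin n ⊕ Fin n ≃ Fin (n + n) :=
  (Equiv.sumCongr (N.orderIsoOfFin h).toEquiv
    ((Nᶜ.orderIsoOfFin (card_compl_of_card_eq_half h)).toEquiv.trans
      (Equiv.subtypeEquivRight fun _ => mem_compl))).trans (Equiv.sumCompl (· ∈ N))

theorem prod_append_prodOn_compl (a : Fin (n + n) → M) {N : Finset (Fin (n + n))}
    (h : N.card = n) :
    SymPow.prod R (Fin.append (a ∘ N.orderEmbOfFin h)
      (a ∘ Nᶜ.orderEmbOfFin (card_compl_of_card_eq_half h))) = SymPow.prod R a := by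
  have happend : Fin.append (a ∘ N.orderEmbOfFin h)
      (a ∘ Nᶜ.orderEmbOfFin (card_compl_of_card_eq_half h)) =
      a ∘ (finSumFinEquiv.symm.trans (splitEquiv h)) := by
    ext i
    cases i using Fin.addCases <;> simp [splitEquiv, -Fin.natAdd_eq_addNat]
  rw [happend, prod_comp_perm]

variable (R M) in
noncomputable def splitMap (N : Finset (Fin (n + n))) :
    (⨂[R]^(n + n) M) →ₗ[R] SymPow R 2 (SymPow R n M) :=
  if h : N.card = n then
    TensorProduct.lift (mul R) ∘ₗ TensorProduct.map (SymPow.mk R n M) (SymPow.mk R n M) ∘ₗ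
      (PiTensorProduct.tmulEquiv R M).symm.toLinearMap ∘ₗ
      (PiTensorProduct.reindex R (fun _ => M) (splitEquiv h).symm).toLinearMap
  else 0

theorem splitMap_tprod (N : Finset (Fin (n + n))) (a : Fin (n + n) → M) :
    splitMap R M N (PiTensorProduct.tprod R a) = splitProd R a N := by
  rw [splitMap, splitProd]
  split_ifs with h
  · simp only [LinearMap.comp_apply, LinearEquiv.coe_coe, PiTensorProduct.reindex_tprod,
      Equiv.symm_symm, PiTensorProduct.tmulEquiv_symm_apply, TensorProduct.map_tmul,
      TensorProduct.lift.tmul, mul_apply]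
    rfl
  · rfl

theorem symRel_le_ker_sum_splitMap (z : Fin (n + n)) :
    symRel R (n + n) M ≤ LinearMap.ker (∑ N ∈ halvesContaining n z, splitMap R M N) := by
  rw [symRel, Submodule.span_le]
  rintro _ ⟨σ, a, rfl⟩
  simp only [SetLike.mem_coe, LinearMap.mem_ker, map_sub, LinearMap.sum_apply, splitMap_tprod,
    sum_splitProd_comp_perm, sum_splitProd_eq a (σ z) z, sub_self]

variable (R M) in
noncomputable def split (z : Fin (n + n)) : SymPow R (n + n) M →ₗ[R] SymPow R 2 (SymPow R n M) :=
  (symRel R (n + n) M).liftQ _ (symRel_le_ker_sum_splitMap z)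

theorem split_prod (z : Fin (n + n)) (a : Fin (n + n) → M) :
    split R M z (SymPow.prod R a) = ∑ N ∈ halvesContaining n z, splitProd R a N :=
  (LinearMap.sum_apply _ _ _).trans (sum_congr rfl fun N _ => splitMap_tprod N a)

end Split

end SymPow

theorem stmt11 {R M : Type*} [CommRing R] [AddCommGroup M] [Module R M]
    (n : ℕ) (hn : 0 < n) :
    ∃ φ : SymPow R (n + n) M →ₗ[R] SymPow R 2 (SymPow R n M),
      (∀ a : Fin (n + n) → M,
        φ (SymPow.prod R a) =
          ∑ N ∈ (((Finset.univ : Finset (Fin (n + n))).powersetCard n).filter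
              (fun N => (⟨0, by omega⟩ : Fin (n + n)) ∈ N)).attach,
            SymPow.prod R
              ![SymPow.prod R (fun i : Fin n =>
                  a ((N.1.orderIsoOfFin
                    (Finset.mem_powersetCard.mp (Finset.mem_filter.mp N.2).1).2 i : Fin (n + n)))),
                SymPow.prod R (fun i : Fin n =>
                  a (((N.1)ᶜ.orderIsoOfFin (by
                    have h := (Finset.mem_powersetCard.mp (Finset.mem_filter.mp N.2).1).2
                    rw [Finset.card_compl, h, Fintype.card_fin]; omega) i : Fin (n + n))))]) ∧
      ∀ q : SymPow R 2 (SymPow R n M) →ₗ[R] SymPow R (n + n) M,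
        (∀ a b : Fin n → M,
          q (SymPow.prod R ![SymPow.prod R a, SymPow.prod R b]) =
            SymPow.prod R (Fin.append a b)) →
        q ∘ₗ φ = ((n + n - 1).factorial / (n.factorial * (n - 1).factorial) : ℕ) • LinearMap.id := by
  let z : Fin (n + n) := ⟨0, by omega⟩
  have hcard {N} (hN : N ∈ halvesContaining n z) : N.card = n :=
    (mem_powersetCard.mp (mem_filter.mp hN).1).2
  refine ⟨SymPow.split R M z, fun a => ?_, fun q hq => SymPow.hom_ext fun a => ?_⟩
  · rw [SymPow.split_prod, ← sum_attach]
    refine sum_congr rfl fun N _ => ?_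
    rw [SymPow.splitProd, dif_pos (hcard N.2)]
    rfl
  · have hterm : ∀ N ∈ halvesContaining n z, q (SymPow.splitProd R a N) = SymPow.prod R a := by
      intro N hN
      rw [SymPow.splitProd, dif_pos (hcard hN)]
      exact (hq _ _).trans (SymPow.prod_append_prodOn_compl a (hcard hN))
    have hchoose : (n + n - 1).choose (n - 1) =
        (n + n - 1).factorial / (n.factorial * (n - 1).factorial) := by
      rw [Nat.choose_eq_factorial_div_factorial (by omega),
        show n + n - 1 - (n - 1) = n by omega, mul_comm]
    rw [LinearMap.comp_apply, SymPow.split_prod, map_sum, sum_congr rfl hterm, sum_const,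
      halvesContaining, card_filter_mem_powersetCard z hn, Fintype.card_fin, hchoose,
      LinearMap.smul_apply, LinearMap.id_apply]
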